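/- arXiv:1002.1695 — 5 statements merged into one kernel-verified Lean document; each statement's English description precedes it below -/
import Mathlib

section
/- Let H be an N×N Hermitian matrix (indexed by a finite set) such that for all x, |H_{xy}|² = (1/(M-1)) · 1[1 ≤ |x-y| ≤ W] deterministically, where the indicator set has exactly M elements for each fixed x (periodic lattice). Define the nonbacktracking powers H^{(n)}_{x_0 x_n} := Σ'_{x_1,…,x_{n-1}} H_{x_0 x_1}⋯H_{x_{n-1}x_n}, where the primed sum imposes x_i ≠ x_{i+2} for 0 ≤ i ≤ n-2. Then H^{(0)} = I, H^{(1)} = H, H^{(2)} = H² − (M/(M-1))·I, and for all n ≥ 3, H^{(n)} = H·H^{(n-1)} − H^{(n-2)}. -/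
open Classical in
/-- The `n`-th nonbacktracking power of a matrix:
`H^{(n)}_{x y} = Σ'_{x_1,…,x_{n-1}} H_{x x_1} ⋯ H_{x_{n-1} y}`, where the primed sum
imposes `x_i ≠ x_{i+2}` for `0 ≤ i ≤ n-2`. -/
noncomputable def nbPow {ι : Type*} [Fintype ι] [DecidableEq ι]
    (H : Matrix ι ι ℂ) (n : ℕ) : Matrix ι ι ℂ :=
  Matrix.of fun x y =>
    ∑ p : Fin (n + 1) → ι,
      if p 0 = x ∧ p (Fin.last n) = y ∧
          (∀ i : ℕ, ∀ h : i + 2 ≤ n, p ⟨i, by omega⟩ ≠ p ⟨i + 2, by omega⟩)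
      then ∏ i : Fin n, H (p i.castSucc) (p i.succ) else 0

/-!
Split the walks counted by `(H * H^{(n-1)})_{xy}` according to whether the first step is
immediately reversed (`x₂ = x₀`). Those that are not are exactly the walks of `H^{(n)}`. A reversed
walk `x → z → x → x₃ → ⋯` picks up the factor `H_{xz} H_{zx} = |H_{xz}|²`, summed over `z ≠ x₃`
only, since the walk must still satisfy `x₁ ≠ x₃`; that sum is `(M-1)/(M-1) = 1` as soon as
`H_{x x₃} ≠ 0`, which leaves `H^{(n-2)}`. For `n = 2` there is no `x₃`, and the sum over all `M`
neighbours of `x` gives the diagonal term `M/(M-1)`.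
-/

section

open Finset

variable {ι : Type*}

def IsNonbacktracking {n : ℕ} (p : Fin (n + 1) → ι) : Prop :=
  ∀ i : ℕ, ∀ h : i + 2 ≤ n, p ⟨i, by omega⟩ ≠ p ⟨i + 2, by omega⟩

def pathWeight (H : Matrix ι ι ℂ) {n : ℕ} (p : Fin (n + 1) → ι) : ℂ :=
  ∏ i : Fin n, H (p i.castSucc) (p i.succ)

theorem isNonbacktracking_of_lt_two {n : ℕ} (hn : n < 2) (p : Fin (n + 1) → ι) :
    IsNonbacktracking p :=
  fun _ h => absurd h (by omega)

theorem isNonbacktracking_cons {n : ℕ} (z : ι) (q : Fin (n + 2) → ι) :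
    IsNonbacktracking (Fin.cons z q : Fin (n + 3) → ι) ↔ z ≠ q 1 ∧ IsNonbacktracking q := by
  constructor
  · intro hp
    refine ⟨?_, fun i h => hp (i + 1) (by omega)⟩
    rw [← Fin.mk_one]
    exact hp 0 (by omega)
  · rintro ⟨hz, hq⟩ (_ | i) h
    · rwa [← Fin.mk_one] at hz
    · exact hq i (by omega)

theorem pathWeight_cons (H : Matrix ι ι ℂ) {n : ℕ} (z : ι) (q : Fin (n + 1) → ι) :
    pathWeight H (Fin.cons z q : Fin (n + 2) → ι) = H z (q 0) * pathWeight H q := by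
  rw [pathWeight, Fin.prod_univ_succ]
  rfl

theorem pathWeight_eq_mul (H : Matrix ι ι ℂ) {n : ℕ} (p : Fin (n + 2) → ι) :
    pathWeight H p = H (p 0) (p 1) * pathWeight H (Fin.tail p) := by
  rw [pathWeight, Fin.prod_univ_succ]
  rfl

theorem sum_fin_succ_pi [Fintype ι] {β : Type*} [AddCommMonoid β] (n : ℕ)
    (f : (Fin (n + 1) → ι) → β) :
    ∑ p, f p = ∑ z : ι, ∑ q : Fin n → ι, f (Fin.cons z q) := by
  rw [← (Fin.consEquiv fun _ => ι).sum_comp, Fintype.sum_prod_type]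
  rfl

section Recursion

variable [Fintype ι] [DecidableEq ι]

open Classical in
theorem nbPow_apply (H : Matrix ι ι ℂ) (n : ℕ) (x y : ι) :
    nbPow H n x y = ∑ p : Fin (n + 1) → ι,
      if p 0 = x ∧ p (Fin.last n) = y ∧ IsNonbacktracking p then pathWeight H p else 0 :=
  rfl

open Classical in
theorem nbPow_succ_apply (H : Matrix ι ι ℂ) (n : ℕ) (x y : ι) :
    nbPow H (n + 1) x y = ∑ q : Fin (n + 1) → ι,
      if q (Fin.last n) = y ∧ IsNonbacktracking (Fin.cons x q : Fin (n + 2) → ι)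
      then H x (q 0) * pathWeight H q else 0 := by
  rw [nbPow_apply, sum_fin_succ_pi, Fintype.sum_eq_single x]
  · refine sum_congr rfl fun q _ => ?_
    simp [pathWeight_cons]
  · intro z hz
    exact sum_eq_zero fun q _ => if_neg fun h => hz h.1

open Classical in
theorem mul_nbPow_apply (H : Matrix ι ι ℂ) (n : ℕ) (x y : ι) :
    (H * nbPow H n) x y = ∑ q : Fin (n + 1) → ι,
      if q (Fin.last n) = y ∧ IsNonbacktracking q then H x (q 0) * pathWeight H q else 0 := by
  simp only [Matrix.mul_apply, nbPow_apply, mul_sum]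
  rw [sum_comm]
  refine sum_congr rfl fun q _ => ?_
  rw [Fintype.sum_eq_single (q 0)]
  · simp only [true_and, mul_ite, mul_zero]
  · intro z hz
    rw [if_neg fun h => hz h.1.symm, mul_zero]

open Classical in
theorem mul_nbPow_sub_nbPow_apply (H : Matrix ι ι ℂ) (n : ℕ) (x y : ι) :
    (H * nbPow H (n + 1)) x y - nbPow H (n + 2) x y = ∑ q : Fin (n + 2) → ι,
      if q (Fin.last (n + 1)) = y ∧ IsNonbacktracking q ∧ x = q 1
      then H x (q 0) * pathWeight H q else 0 := by
  rw [mul_nbPow_apply, nbPow_succ_apply, ← sum_sub_distrib]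
  refine sum_congr rfl fun q _ => ?_
  rw [isNonbacktracking_cons]
  by_cases hx : x = q 1 <;> simp [hx]

theorem nbPow_zero (H : Matrix ι ι ℂ) : nbPow H 0 = 1 := by
  ext x y
  classical
  rw [Matrix.one_apply, nbPow_apply, sum_fin_succ_pi]
  simp [pathWeight, isNonbacktracking_of_lt_two, ite_and]

theorem nbPow_one (H : Matrix ι ι ℂ) : nbPow H 1 = H := by
  ext x y
  classical
  rw [nbPow_succ_apply, sum_fin_succ_pi]
  simp [pathWeight, isNonbacktracking_of_lt_two]

theorem nbPow_two (H : Matrix ι ι ℂ) :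
    nbPow H 2 = H ^ 2 - Matrix.diagonal fun x => ∑ z, H x z * H z x := by
  ext x y
  classical
  have hdiag : (H * nbPow H 1) x y - nbPow H 2 x y =
      if x = y then ∑ z, H x z * H z x else 0 := by
    rw [mul_nbPow_sub_nbPow_apply, sum_fin_succ_pi]
    by_cases hxy : x = y
    · subst hxy
      simp [sum_fin_succ_pi, pathWeight, isNonbacktracking_of_lt_two, eq_comm]
    · simp [sum_fin_succ_pi, pathWeight, isNonbacktracking_of_lt_two, ite_and, hxy]
  rw [Matrix.sub_apply, Matrix.diagonal_apply, ← hdiag, nbPow_one, sq, sub_sub_cancel]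

theorem nbPow_add_three (H : Matrix ι ι ℂ)
    (hback : ∀ x w, (∑ z ∈ univ.erase w, H x z * H z x) * H x w = H x w) (n : ℕ) :
    nbPow H (n + 3) = H * nbPow H (n + 2) - nbPow H (n + 1) := by
  ext x y
  classical
  have hbacktrack : (H * nbPow H (n + 2)) x y - nbPow H (n + 3) x y = nbPow H (n + 1) x y := by
    rw [mul_nbPow_sub_nbPow_apply, sum_fin_succ_pi, sum_comm, nbPow_apply]
    refine sum_congr rfl fun r _ => ?_
    simp only [isNonbacktracking_cons, pathWeight_cons, Fin.cons_zero, Fin.cons_one, Fin.cons_last]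
    by_cases hr : r 0 = x ∧ r (Fin.last (n + 1)) = y ∧ IsNonbacktracking r
    · obtain ⟨rfl, hy, hnb⟩ := hr
      simp only [hy, hnb, and_true, true_and, if_true]
      rw [← sum_filter, filter_ne', pathWeight_eq_mul]
      simp only [← mul_assoc, ← sum_mul]
      rw [hback]
    · rw [if_neg hr]
      exact sum_eq_zero fun z _ => if_neg fun h => hr ⟨h.2.2.symm, h.1, h.2.1.2⟩
  rw [Matrix.sub_apply, ← hbacktrack, sub_sub_cancel]

end Recursion

section BandMatrix

variable {H : Matrix ι ι ℂ} {A : ι → ι → Prop} {M : ℕ}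

theorem Matrix.IsHermitian.mul_apply_swap_eq_norm_sq (hHerm : H.IsHermitian) (x z : ι) :
    H x z * H z x = ((‖H x z‖ ^ 2 : ℝ) : ℂ) := by
  rw [← hHerm.apply z x, Complex.ofReal_pow]
  exact Complex.mul_conj' _

open Classical in
theorem mul_apply_swap_eq_ite (hHerm : H.IsHermitian)
    (hH : ∀ x y, ‖H x y‖ ^ 2 = if A x y then 1 / ((M : ℝ) - 1) else 0) (x z : ι) :
    H x z * H z x = if A x z then 1 / ((M : ℂ) - 1) else 0 := by
  rw [hHerm.mul_apply_swap_eq_norm_sq, hH]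
  split_ifs <;> push_cast <;> rfl

open Classical in
theorem sum_mul_apply_swap [Fintype ι] (hHerm : H.IsHermitian)
    (hcard : ∀ x, Nat.card {y // A x y} = M)
    (hH : ∀ x y, ‖H x y‖ ^ 2 = if A x y then 1 / ((M : ℝ) - 1) else 0) (x : ι) :
    ∑ z, H x z * H z x = M / (M - 1) := by
  have hneighbours : #{z | A x z} = M := by
    rw [← hcard x, Nat.card_eq_fintype_card, Fintype.card_subtype]
  simp only [mul_apply_swap_eq_ite hHerm hH, sum_ite, sum_const_zero, add_zero, sum_const, hneighbours,
    nsmul_eq_mul, mul_one_div]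

open Classical in
theorem sum_erase_mul_apply_swap_mul [Fintype ι] [DecidableEq ι] (hHerm : H.IsHermitian)
    (hcard : ∀ x, Nat.card {y // A x y} = M)
    (hH : ∀ x y, ‖H x y‖ ^ 2 = if A x y then 1 / ((M : ℝ) - 1) else 0) (x w : ι) :
    (∑ z ∈ univ.erase w, H x z * H z x) * H x w = H x w := by
  -- Split on `H x w`, not on `A x w`: as `1 / 0 = 0` in `hH`, only `H x w ≠ 0` rules out `M = 1`.
  by_cases hxw : H x w = 0
  · rw [hxw, mul_zero]
  have hne : H x w * H w x ≠ 0 := by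
    rw [hHerm.mul_apply_swap_eq_norm_sq]
    exact_mod_cast pow_ne_zero 2 (norm_ne_zero_iff.mpr hxw)
  have hA : A x w := by
    by_contra hA
    rw [mul_apply_swap_eq_ite hHerm hH, if_neg hA] at hne
    exact hne rfl
  rw [mul_apply_swap_eq_ite hHerm hH, if_pos hA, one_div, ne_eq, inv_eq_zero] at hne
  rw [sum_erase_eq_sub (mem_univ w), sum_mul_apply_swap hHerm hcard hH,
    mul_apply_swap_eq_ite hHerm hH, if_pos hA, ← sub_div, div_self hne, one_mul]

end BandMatrix

end

open Classical in
theorem nbPow_recursion_general {ι : Type*} [Fintype ι] [DecidableEq ι]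
    (H : Matrix ι ι ℂ) (A : ι → ι → Prop) (M : ℕ)
    (hHerm : H.IsHermitian)
    (hcard : ∀ x, Nat.card {y // A x y} = M)
    (hH : ∀ x y, ‖H x y‖ ^ 2 = if A x y then 1 / ((M : ℝ) - 1) else 0) :
    nbPow H 0 = 1 ∧ nbPow H 1 = H ∧
      nbPow H 2 = H ^ 2 - ((M : ℂ) / ((M : ℂ) - 1)) • (1 : Matrix ι ι ℂ) ∧
      ∀ n : ℕ, 3 ≤ n → nbPow H n = H * nbPow H (n - 1) - nbPow H (n - 2) := by
  refine ⟨nbPow_zero H, nbPow_one H, ?_, fun n hn => ?_⟩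
  · simp only [nbPow_two, sum_mul_apply_swap hHerm hcard hH, Matrix.smul_one_eq_diagonal]
  · obtain ⟨m, rfl⟩ := Nat.exists_eq_add_of_le' hn
    exact nbPow_add_three H (sum_erase_mul_apply_swap_mul hHerm hcard hH) m

open Classical in
/-- Nonbacktracking powers of a Hermitian band-type matrix with
`|H_{xy}|² = (M-1)^{-1} 1[x ~ y]` (each row having exactly `M` neighbours) satisfy
`H^{(0)} = I`, `H^{(1)} = H`, `H^{(2)} = H² − (M/(M-1)) I` and, for `n ≥ 3`,
`H^{(n)} = H H^{(n-1)} − H^{(n-2)}`. -/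
theorem nbPow_recursion {ι : Type*} [Fintype ι] [DecidableEq ι]
    (H : Matrix ι ι ℂ) (A : ι → ι → Prop) (M : ℕ) (hM : 2 ≤ M)
    (hHerm : H.IsHermitian)
    (hAsymm : ∀ x y, A x y ↔ A y x)
    (hAirr : ∀ x, ¬ A x x)
    (hcard : ∀ x, Nat.card {y // A x y} = M)
    (hH : ∀ x y, ‖H x y‖ ^ 2 = if A x y then 1 / ((M : ℝ) - 1) else 0) :
    nbPow H 0 = 1 ∧ nbPow H 1 = H ∧
      nbPow H 2 = H ^ 2 - ((M : ℂ) / ((M : ℂ) - 1)) • (1 : Matrix ι ι ℂ) ∧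
      ∀ n : ℕ, 3 ≤ n → nbPow H n = H * nbPow H (n - 1) - nbPow H (n - 2) :=
  nbPow_recursion_general H A M hHerm hcard hH
end

section
/- There exists a constant C such that for all integers n ≥ 0 and all t > 0, the coefficient a_n(t) := Σ_{k≥0} α_{n+2k}(t)/(M−1)^k satisfies |a_n(t)| ≤ C t^n/n!, provided M ≥ 3. -/
open scoped Real

/-- Chebyshev transform coefficient of `ξ ↦ e^{-itξ}`. -/
noncomputable def chebAlpha (k : ℕ) (t : ℝ) : ℂ :=
  (2 / (π : ℂ)) * ∫ ξ in (-1:ℝ)..1,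
    (Real.sqrt (1 - ξ ^ 2) : ℂ) * Complex.exp (-Complex.I * t * ξ) *
      (Polynomial.Chebyshev.U ℂ (k : ℤ)).eval (ξ : ℂ)

/-- `a_n(t) = Σ_{k≥0} α_{n+2k}(t)/(M−1)^k`. -/
noncomputable def aCoeff (M : ℕ) (n : ℕ) (t : ℝ) : ℂ :=
  ∑' k : ℕ, chebAlpha (n + 2 * k) t / ((M : ℂ) - 1) ^ k

/-!
Substituting `ξ = cos θ` gives
`α_n(t) = (2/π) ∫₀^π sin θ sin((n+1)θ) e^{-it cos θ} dθ`. The weight `sin θ sin((n+1)θ)` is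
orthogonal to `cos^m θ` for `m < n`, so the Taylor polynomial of degree `< n` of
`e^{-it cos θ}` may be subtracted; the remainder is at most `t^n/n!`, whence
`|α_n(t)| ≤ 2 t^n/n!`, and trivially `|α_n(t)| ≤ 2`. For `m ≥ n`,
`min(1, t^m/m!) ≤ t^n/n!` (split at `t = n + 1`), so the `k`-th term of `a_n(t)` is at most
`2 t^n/n! · 2^{-k}` when `M ≥ 3`, and the geometric series gives `C = 4`.
-/

open Complex ComplexConjugate Finset intervalIntegral
open scoped Nat

noncomputable def expIRemainder (n : ℕ) (x : ℝ) : ℂ :=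
  exp (x * I) - ∑ m ∈ range n, ((x : ℂ) * I) ^ m / m !

@[fun_prop]
lemma continuous_expIRemainder (n : ℕ) : Continuous (expIRemainder n) := by
  unfold expIRemainder
  fun_prop

lemma expIRemainder_succ_zero (n : ℕ) : expIRemainder (n + 1) 0 = 0 := by
  simp [expIRemainder, sum_range_succ']

lemma hasDerivAt_expIRemainder_succ (n : ℕ) (x : ℝ) :
    HasDerivAt (expIRemainder (n + 1)) (I * expIRemainder n x) x := by
  have hexp : HasDerivAt (fun y : ℝ => exp (y * I)) (exp (x * I) * I) x :=
    ((hasDerivAt_id (x : ℂ)).mul_const I).cexp.comp_ofReal.congr_deriv (by simp)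
  have hmono (m : ℕ) : HasDerivAt (fun y : ℝ => ((y : ℂ) * I) ^ (m + 1) / (m + 1)!)
      (I * (((x : ℂ) * I) ^ m / m !)) x := by
    refine ((((hasDerivAt_id (x : ℂ)).mul_const I).pow (m + 1)).div_const
      ((m + 1)! : ℂ)).comp_ofReal.congr_deriv ?_
    rw [Nat.factorial_succ, id]
    push_cast
    field_simp
  have hsum : HasDerivAt
      (fun y : ℝ => exp (y * I) - ∑ m ∈ range n, ((y : ℂ) * I) ^ (m + 1) / (m + 1)! - 1)
      (exp (x * I) * I - ∑ m ∈ range n, I * (((x : ℂ) * I) ^ m / m !)) x :=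
    (hexp.sub (HasDerivAt.fun_sum fun m _ => hmono m)).sub_const 1
  convert hsum using 1
  · ext y
    simp only [expIRemainder, sum_range_succ', pow_zero, Nat.factorial_zero, Nat.cast_one,
      div_one]
    ring
  · rw [expIRemainder, mul_sub, mul_sum, mul_comm]

lemma norm_expIRemainder_le_of_nonneg (n : ℕ) {x : ℝ} (hx : 0 ≤ x) :
    ‖expIRemainder n x‖ ≤ x ^ n / n ! := by
  induction n generalizing x with
  | zero => simp [expIRemainder, norm_exp_ofReal_mul_I]
  | succ n ih =>
    have hftc := integral_eq_sub_of_hasDerivAt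
      (fun y _ => hasDerivAt_expIRemainder_succ n y)
      ((by fun_prop : Continuous _).intervalIntegrable 0 x)
    rw [expIRemainder_succ_zero, sub_zero] at hftc
    rw [← hftc]
    calc ‖∫ y in (0 : ℝ)..x, I * expIRemainder n y‖
        ≤ |∫ y in (0 : ℝ)..x, y ^ n / n !| := by
          refine norm_integral_le_abs_of_norm_le ?_
            ((by fun_prop : Continuous fun y : ℝ => y ^ n / n !).intervalIntegrable 0 x)
          filter_upwards [MeasureTheory.ae_restrict_mem measurableSet_uIoc] with y hy
          rw [Set.uIoc_of_le hx] at hy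
          rw [norm_mul, norm_I, one_mul]
          exact ih hy.1.le
      _ = x ^ (n + 1) / (n + 1)! := by
          rw [integral_div, integral_pow, zero_pow n.succ_ne_zero, sub_zero,
            abs_of_nonneg (by positivity), Nat.factorial_succ]
          push_cast
          field_simp

lemma expIRemainder_neg (n : ℕ) (x : ℝ) :
    expIRemainder n (-x) = conj (expIRemainder n x) := by
  simp only [expIRemainder, map_sub, map_sum, map_div₀, map_pow, map_mul, conj_ofReal, conj_I,
    map_natCast, ← exp_conj]
  push_cast
  ring_nf

lemma norm_expIRemainder_le (n : ℕ) (x : ℝ) : ‖expIRemainder n x‖ ≤ |x| ^ n / n ! := by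
  rcases le_total 0 x with hx | hx
  · rw [abs_of_nonneg hx]
    exact norm_expIRemainder_le_of_nonneg n hx
  · have hx' : 0 ≤ -x := neg_nonneg.2 hx
    rw [← neg_neg x, expIRemainder_neg, RCLike.norm_conj, abs_neg, abs_of_nonneg hx']
    exact norm_expIRemainder_le_of_nonneg n hx'

lemma integral_cos_nat_mul_mul_cos_pow_eq_zero {m k : ℕ} (hmk : m < k) :
    ∫ θ in (0 : ℝ)..π, Real.cos (k * θ) * Real.cos θ ^ m = 0 := by
  induction m generalizing k with
  | zero =>
    have hk : (k : ℝ) ≠ 0 := by positivity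
    simp [integral_comp_mul_left (fun x => Real.cos x) hk, Real.sin_nat_mul_pi]
  | succ m ih =>
    have hprod (θ : ℝ) : Real.cos (k * θ) * Real.cos θ ^ (m + 1)
        = (Real.cos ((k + 1 : ℕ) * θ) * Real.cos θ ^ m
          + Real.cos ((k - 1 : ℕ) * θ) * Real.cos θ ^ m) / 2 := by
      have hc := Real.cos_add_cos ((k + 1) * θ) ((k - 1) * θ)
      rw [show ((k + 1) * θ + (k - 1) * θ) / 2 = k * θ by ring,
        show ((k + 1) * θ - (k - 1) * θ) / 2 = θ by ring] at hc
      push_cast [Nat.cast_sub (by omega : 1 ≤ k)]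
      linear_combination (-Real.cos θ ^ m / 2) * hc
    simp_rw [hprod]
    rw [integral_div,
      integral_add ((by fun_prop : Continuous _).intervalIntegrable _ _)
        ((by fun_prop : Continuous _).intervalIntegrable _ _),
      ih (by omega), ih (by omega)]
    simp

lemma integral_sin_mul_sin_mul_cos_pow_eq_zero {n m : ℕ} (hmn : m < n) :
    ∫ θ in (0 : ℝ)..π, Real.sin θ * Real.sin ((n + 1) * θ) * Real.cos θ ^ m = 0 := by
  have hprod (θ : ℝ) : Real.sin θ * Real.sin ((n + 1) * θ) * Real.cos θ ^ m
      = (Real.cos (n * θ) * Real.cos θ ^ m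
        - Real.cos ((n + 2 : ℕ) * θ) * Real.cos θ ^ m) / 2 := by
    have hc := Real.cos_sub_cos (n * θ) ((n + 2) * θ)
    rw [show (n * θ + (n + 2) * θ) / 2 = (n + 1) * θ by ring,
      show (n * θ - (n + 2) * θ) / 2 = -θ by ring, Real.sin_neg] at hc
    push_cast
    linear_combination (-Real.cos θ ^ m / 2) * hc
  simp_rw [hprod]
  rw [integral_div,
    integral_sub ((by fun_prop : Continuous _).intervalIntegrable _ _)
      ((by fun_prop : Continuous _).intervalIntegrable _ _),
    integral_cos_nat_mul_mul_cos_pow_eq_zero hmn,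
    integral_cos_nat_mul_mul_cos_pow_eq_zero (by omega)]
  simp

lemma integral_sin_mul_sin_mul_sum_cos_pow_eq_zero (n : ℕ) (c : ℕ → ℂ) :
    ∫ θ in (0 : ℝ)..π, ((Real.sin θ * Real.sin ((n + 1) * θ) : ℝ) : ℂ) *
      ∑ m ∈ range n, c m * Real.cos θ ^ m = 0 := by
  simp_rw [mul_sum]
  rw [integral_finsetSum fun m _ => (by fun_prop : Continuous _).intervalIntegrable _ _]
  refine sum_eq_zero fun m hm => ?_
  simp_rw [mul_left_comm _ (c m), ← ofReal_pow, ← ofReal_mul]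
  rw [integral_const_mul, integral_ofReal,
    integral_sin_mul_sin_mul_cos_pow_eq_zero (mem_range.1 hm), ofReal_zero, mul_zero]

lemma chebAlpha_eq_integral_sin (n : ℕ) (t : ℝ) :
    chebAlpha n t = 2 / π * ∫ θ in (0 : ℝ)..π,
      ((Real.sin θ * Real.sin ((n + 1) * θ) : ℝ) : ℂ) * exp ((-(t * Real.cos θ) : ℝ) * I) := by
  have hcont : Continuous fun ξ : ℝ => (Real.sqrt (1 - ξ ^ 2) : ℂ) *
      exp (-I * t * ξ) * (Polynomial.Chebyshev.U ℂ (n : ℤ)).eval (ξ : ℂ) := by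
    have := (Polynomial.Chebyshev.U ℂ (n : ℤ)).continuous_aeval.comp continuous_ofReal
    fun_prop
  have hsubst := integral_deriv_smul_comp (a := π) (b := 0)
    (fun θ _ => Real.hasDerivAt_cos θ) (by fun_prop) hcont
  simp only [Function.comp_def, Real.cos_pi, Real.cos_zero] at hsubst
  rw [chebAlpha, ← hsubst, integral_symm, ← integral_neg]
  congr 1
  refine integral_congr fun θ hθ => ?_
  rw [Set.uIcc_of_le Real.pi_pos.le] at hθ
  have hsqrt : Real.sqrt (1 - Real.cos θ ^ 2) = Real.sin θ := by
    rw [← Real.sin_sq, Real.sqrt_sq (Real.sin_nonneg_of_nonneg_of_le_pi hθ.1 hθ.2)]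
  have hU : (Polynomial.Chebyshev.U ℂ (n : ℤ)).eval (Real.cos θ : ℂ) * Real.sin θ
      = Real.sin ((n + 1) * θ) := by
    rw [ofReal_cos, ofReal_sin, Polynomial.Chebyshev.U_complex_cos, ofReal_sin]
    push_cast
    ring_nf
  simp only [hsqrt, real_smul]
  rw [ofReal_mul, ← hU]
  push_cast
  ring_nf

lemma chebAlpha_eq_integral_expIRemainder (n : ℕ) (t : ℝ) :
    chebAlpha n t = 2 / π * ∫ θ in (0 : ℝ)..π,
      ((Real.sin θ * Real.sin ((n + 1) * θ) : ℝ) : ℂ) * expIRemainder n (-(t * Real.cos θ)) := by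
  have htaylor (θ : ℝ) : exp ((-(t * Real.cos θ) : ℝ) * I)
      = expIRemainder n (-(t * Real.cos θ))
        + ∑ m ∈ range n, (-t * I) ^ m / m ! * Real.cos θ ^ m := by
    have hpoly : ∑ m ∈ range n, (((-(t * Real.cos θ) : ℝ) : ℂ) * I) ^ m / m !
        = ∑ m ∈ range n, (-t * I) ^ m / m ! * Real.cos θ ^ m :=
      sum_congr rfl fun m _ => by push_cast; ring
    rw [expIRemainder, hpoly, sub_add_cancel]
  simp_rw [chebAlpha_eq_integral_sin, htaylor, mul_add]
  rw [integral_add ((by fun_prop : Continuous _).intervalIntegrable _ _)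
      ((by fun_prop : Continuous _).intervalIntegrable _ _),
    integral_sin_mul_sin_mul_sum_cos_pow_eq_zero, add_zero]

lemma norm_two_div_pi_mul_integral_le {f : ℝ → ℂ} {C : ℝ} (hf : ∀ θ, ‖f θ‖ ≤ C) :
    ‖2 / π * ∫ θ in (0 : ℝ)..π, f θ‖ ≤ 2 * C := by
  have h := norm_integral_le_of_norm_le_const (a := 0) (b := π) fun θ _ => hf θ
  rw [sub_zero, abs_of_pos Real.pi_pos] at h
  rw [norm_mul, show ‖(2 / π : ℂ)‖ = 2 / π by simp [abs_of_pos Real.pi_pos]]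
  calc 2 / π * ‖∫ θ in (0 : ℝ)..π, f θ‖ ≤ 2 / π * (C * π) := by gcongr
    _ = 2 * C := by field_simp

lemma norm_ofReal_sin_mul_sin_mul_le (x y : ℝ) (z : ℂ) :
    ‖((Real.sin x * Real.sin y : ℝ) : ℂ) * z‖ ≤ ‖z‖ := by
  rw [norm_mul, norm_real, norm_mul]
  exact mul_le_of_le_one_left (norm_nonneg z)
    (mul_le_one₀ (Real.abs_sin_le_one x) (abs_nonneg _) (Real.abs_sin_le_one y))

lemma norm_chebAlpha_le_two (n : ℕ) (t : ℝ) : ‖chebAlpha n t‖ ≤ 2 := by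
  rw [chebAlpha_eq_integral_sin]
  refine (norm_two_div_pi_mul_integral_le fun θ => ?_).trans_eq (mul_one 2)
  exact (norm_ofReal_sin_mul_sin_mul_le _ _ _).trans_eq (norm_exp_ofReal_mul_I _)

lemma norm_chebAlpha_le_pow_div_factorial (n : ℕ) {t : ℝ} (ht : 0 ≤ t) :
    ‖chebAlpha n t‖ ≤ 2 * (t ^ n / n !) := by
  rw [chebAlpha_eq_integral_expIRemainder]
  refine norm_two_div_pi_mul_integral_le fun θ => (norm_ofReal_sin_mul_sin_mul_le _ _ _).trans ?_
  refine (norm_expIRemainder_le n _).trans ?_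
  have : |-(t * Real.cos θ)| ≤ t := by
    rw [abs_neg, abs_mul, abs_of_nonneg ht]
    exact mul_le_of_le_one_right ht (Real.abs_cos_le_one θ)
  gcongr

lemma min_one_pow_div_factorial_le {t : ℝ} (ht : 0 ≤ t) {n m : ℕ} (hnm : n ≤ m) :
    min 1 (t ^ m / m !) ≤ t ^ n / n ! := by
  rcases le_or_gt t (n + 1) with htn | htn
  · refine min_le_of_right_le ?_
    obtain ⟨j, rfl⟩ := Nat.exists_eq_add_of_le hnm
    have hfact : (n ! * (n + 1) ^ j : ℝ) ≤ (n + j)! := by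
      exact_mod_cast Nat.factorial_mul_pow_le_factorial
    calc t ^ (n + j) / (n + j)! ≤ t ^ n * t ^ j / (n ! * (n + 1) ^ j) := by
          rw [pow_add]; gcongr
      _ = t ^ n / n ! * (t / (n + 1)) ^ j := by rw [div_pow]; field_simp
      _ ≤ t ^ n / n ! := by
          refine mul_le_of_le_one_right (by positivity) (pow_le_one₀ (by positivity) ?_)
          rwa [div_le_one (by positivity)]
  · refine min_le_of_left_le ?_
    rw [one_le_div (by positivity)]
    calc (n ! : ℝ) ≤ n ^ n := by exact_mod_cast Nat.factorial_le_pow n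
      _ ≤ t ^ n := by gcongr; linarith

lemma norm_chebAlpha_le_of_le {n m : ℕ} (hnm : n ≤ m) {t : ℝ} (ht : 0 ≤ t) :
    ‖chebAlpha m t‖ ≤ 2 * (t ^ n / n !) :=
  calc ‖chebAlpha m t‖ ≤ 2 * min 1 (t ^ m / m !) := by
        rw [mul_min_of_nonneg _ _ zero_le_two, mul_one]
        exact le_min (norm_chebAlpha_le_two m t) (norm_chebAlpha_le_pow_div_factorial m ht)
    _ ≤ 2 * (t ^ n / n !) := by gcongr; exact min_one_pow_div_factorial_le ht hnm

/-- There is a constant `C` such that `|a_n(t)| ≤ C t^n / n!` for all `n ≥ 0`,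
all `t > 0`, and all `M ≥ 3`. -/
theorem aCoeff_le :
    ∃ C : ℝ, 0 < C ∧ ∀ (M : ℕ), 3 ≤ M → ∀ (n : ℕ) (t : ℝ), 0 < t →
      ‖aCoeff M n t‖ ≤ C * t ^ n / (Nat.factorial n : ℝ) := by
  refine ⟨4, by norm_num, fun M hM n t ht => ?_⟩
  have hM : (2 : ℝ) ≤ ‖(M : ℂ) - 1‖ := by
    rw [← Nat.cast_pred (by omega), Complex.norm_natCast]
    exact_mod_cast Nat.le_pred_of_lt hM
  have hterm (k : ℕ) :
      ‖chebAlpha (n + 2 * k) t / ((M : ℂ) - 1) ^ k‖ ≤ 2 * (t ^ n / n !) * (1 / 2) ^ k := by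
    rw [norm_div, norm_pow, div_pow, one_pow, ← div_eq_mul_one_div]
    gcongr
    exact norm_chebAlpha_le_of_le (by omega) ht.le
  calc ‖aCoeff M n t‖ ≤ 2 * (t ^ n / n !) * 2 :=
        tsum_of_norm_bounded (hasSum_geometric_two.mul_left _) hterm
    _ = 4 * t ^ n / n ! := by ring
end

section
/- The 2/3 rule: Let Σ be a skeleton pairing of the 2m̄ edges of the circle graph C_{m+m'} (with m+m' = 2m̄ and distinguished vertices 0 and m), i.e., a perfect matching of the edge set containing no parallel bridges and such that two matched edges are adjacent only if their common vertex lies in {0, m}. Define the permutation τ on the vertex set by: if e = (i, i+1) is the outgoing edge of vertex i and e' = (τi − 1, τi) is the edge matched to e, then i ↦ τi. Let L(Σ) be the number of orbits of τ not containing the vertex 0. Then L(Σ) ≤ (2m̄)/3 + 1/3. -/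
/-!
Every pair of adjacent matched edges meeting at a vertex `i ∉ {0, m}` would make `i` a fixed
point of `τ`, and a pair of parallel bridges would make a `2`-cycle of `τ`; hence every orbit
of `τ` avoiding `0` and `m` has at least three vertices. The orbits avoiding `0` are disjoint
subsets of the `2m̄ - 1` vertices other than `0`, and at most one of them contains `m`, so
`3 L(Σ) ≤ (2m̄ - 1) + 2`.
-/

/-- The map `τ` associated with a pairing `σ` of the edges of the cycle on `ZMod n`
(edge `e_i = (i, i+1)` being matched with `e_{σ i}`):  `τ i = σ i + 1`, the terminal
vertex of the edge matched with the outgoing edge of `i`. -/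
def tauPerm {n : ℕ} (σ : Equiv.Perm (ZMod n)) : Equiv.Perm (ZMod n) :=
  σ.trans (Equiv.addRight 1)

/-- `σ` is a skeleton pairing of the edges `e_i = (i,i+1)` of the cycle on `ZMod n`
with distinguished vertices `0` and `m`: it is a perfect matching of the edge set
(a fixed-point-free involution), two matched edges are adjacent only if their common
vertex lies in `{0, m}`, and there are no parallel bridges, i.e. no pair of bridges
`{e_i, e_j}`, `{e_{i+1}, e_{j-1}}` with `i+1, j ∉ {0, m}`. -/
def IsSkeleton {n : ℕ} (m : ZMod n) (σ : Equiv.Perm (ZMod n)) : Prop :=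
  (∀ i, σ (σ i) = i) ∧ (∀ i, σ i ≠ i) ∧
    (∀ i, σ i = i + 1 → i + 1 = 0 ∨ i + 1 = m) ∧
    (∀ i, σ (i + 1) = σ i - 1 → i + 1 = 0 ∨ i + 1 = m ∨ σ i = 0 ∨ σ i = m)

open Finset

theorem Finset.three_mul_card_le_of_pairwiseDisjoint {α : Type*} [DecidableEq α]
    {s : Finset α} {F : Finset (Finset α)} (b : α)
    (hdisj : (F : Set (Finset α)).PairwiseDisjoint id) (hsub : ∀ t ∈ F, t ⊆ s)
    (hne : ∀ t ∈ F, t.Nonempty) (hcard : ∀ t ∈ F, b ∉ t → 3 ≤ #t) :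
    3 * #F ≤ #s + 2 := by
  have hb : #{t ∈ F | b ∈ t} ≤ 1 :=
    card_le_one.2 fun t ht u hu =>
      hdisj.elim_finset (mem_filter.1 ht).1 (mem_filter.1 hu).1 b (mem_filter.1 ht).2
        (mem_filter.1 hu).2
  have hsum : ∑ t ∈ F, #t ≤ #s := by
    calc ∑ t ∈ F, #t = #(F.biUnion id) := (card_biUnion hdisj).symm
      _ ≤ #s := card_le_card (biUnion_subset.2 hsub)
  have hpt : ∀ t ∈ F, 3 ≤ #t + 2 * if b ∈ t then 1 else 0 := by
    intro t ht
    split_ifs with h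
    · have := (hne t ht).card_pos
      omega
    · have := hcard t ht h
      omega
  calc 3 * #F = ∑ _t ∈ F, 3 := by rw [sum_const, smul_eq_mul, mul_comm]
    _ ≤ ∑ t ∈ F, (#t + 2 * if b ∈ t then 1 else 0) := sum_le_sum hpt
    _ = ∑ t ∈ F, #t + 2 * #{t ∈ F | b ∈ t} := by
      rw [sum_add_distrib, ← mul_sum, ← card_filter]
    _ ≤ #s + 2 := by omega

namespace Equiv.Perm

variable {α : Type*} [Fintype α] [DecidableEq α] (τ : Perm α)

def orbitFinset (i : α) : Finset α := {j | τ.SameCycle i j}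

variable {τ}

@[simp]
theorem mem_orbitFinset {i j : α} : j ∈ τ.orbitFinset i ↔ τ.SameCycle i j := by
  simp [orbitFinset]

@[simp]
theorem coe_orbitFinset (i : α) : (τ.orbitFinset i : Set α) = {j | τ.SameCycle i j} := by
  ext; simp

theorem orbitFinset_nonempty (i : α) : (τ.orbitFinset i).Nonempty :=
  ⟨i, mem_orbitFinset.2 (SameCycle.refl τ i)⟩

theorem orbitFinset_eq_of_sameCycle {i j : α} (h : τ.SameCycle i j) :
    τ.orbitFinset i = τ.orbitFinset j := by
  ext x
  simp only [mem_orbitFinset]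
  exact ⟨h.symm.trans, h.trans⟩

theorem pairwiseDisjoint_range_orbitFinset : (Set.range τ.orbitFinset).PairwiseDisjoint id := by
  rintro _ ⟨i, rfl⟩ _ ⟨j, rfl⟩ hne
  refine disjoint_left.2 fun x hi hj => hne ?_
  exact orbitFinset_eq_of_sameCycle ((mem_orbitFinset.1 hi).trans (mem_orbitFinset.1 hj).symm)

theorem three_le_card_orbitFinset {i : α} (h₁ : τ i ≠ i) (h₂ : τ (τ i) ≠ i) :
    3 ≤ #(τ.orbitFinset i) := by
  have h₃ : τ i ≠ τ (τ i) := fun h => h₁ (τ.injective h).symm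
  calc 3 = #{i, τ i, τ (τ i)} := (card_eq_three.2 ⟨_, _, _, h₁.symm, h₂.symm, h₃, rfl⟩).symm
    _ ≤ #(τ.orbitFinset i) := by
      refine card_le_card fun x hx => ?_
      simp only [mem_insert, mem_singleton] at hx
      rcases hx with rfl | rfl | rfl <;> simp [SameCycle.refl]

theorem ncard_orbits_eq_card_image (p : α → Prop) [DecidablePred p] :
    {s : Set α | ∃ i, p i ∧ s = {j | τ.SameCycle i j}}.ncard
      = #(({i | p i} : Finset α).image τ.orbitFinset) := by
  have : {s : Set α | ∃ i, p i ∧ s = {j | τ.SameCycle i j}}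
      = (↑) '' (↑(({i | p i} : Finset α).image τ.orbitFinset) : Set (Finset α)) := by
    ext s
    simp [eq_comm]
  rw [this, Set.ncard_image_of_injective _ coe_injective, Set.ncard_coe_finset]

end Equiv.Perm

section Skeleton

open Equiv.Perm

variable {n : ℕ} {m : ZMod n} {σ : Equiv.Perm (ZMod n)}

@[simp]
theorem tauPerm_apply (σ : Equiv.Perm (ZMod n)) (i : ZMod n) : tauPerm σ i = σ i + 1 := rfl

theorem IsSkeleton.tauPerm_apply_ne (hσ : IsSkeleton m σ) {i : ZMod n} (h0 : i ≠ 0)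
    (hm : i ≠ m) : tauPerm σ i ≠ i := by
  intro h
  have hσi : σ i = i - 1 := eq_sub_of_add_eq h
  have hσi' : σ (i - 1) = i - 1 + 1 := by rw [sub_add_cancel, ← hσi, hσ.1]
  simpa [h0, hm] using hσ.2.2.1 (i - 1) hσi'

theorem IsSkeleton.tauPerm_tauPerm_apply_ne (hσ : IsSkeleton m σ) {i : ZMod n} (h0 : i ≠ 0)
    (hm : i ≠ m) (h0' : tauPerm σ i ≠ 0) (hm' : tauPerm σ i ≠ m) :
    tauPerm σ (tauPerm σ i) ≠ i := by
  intro h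
  rw [tauPerm_apply] at h0' hm'
  have hpar : σ (σ i + 1) = σ (σ i) - 1 := by
    rw [hσ.1, eq_sub_iff_add_eq]
    exact h
  simpa [h0, hm, h0', hm', hσ.1] using hσ.2.2.2 (σ i) hpar

theorem IsSkeleton.three_le_card_orbitFinset [NeZero n] (hσ : IsSkeleton m σ) {i : ZMod n}
    (h0 : ¬ (tauPerm σ).SameCycle i 0) (hm : ¬ (tauPerm σ).SameCycle i m) :
    3 ≤ #((tauPerm σ).orbitFinset i) := by
  have hi : ∀ {j}, ¬ (tauPerm σ).SameCycle i j → i ≠ j ∧ tauPerm σ i ≠ j := fun hj =>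
    ⟨by rintro rfl; exact hj (SameCycle.refl _ _),
     by rintro rfl; exact hj (sameCycle_apply_right.2 (SameCycle.refl _ _))⟩
  exact Equiv.Perm.three_le_card_orbitFinset (hσ.tauPerm_apply_ne (hi h0).1 (hi hm).1)
    (hσ.tauPerm_tauPerm_apply_ne (hi h0).1 (hi hm).1 (hi h0).2 (hi hm).2)

end Skeleton

/-- The 2/3 rule: the number `L(Σ)` of orbits of `τ` not containing the vertex `0`
satisfies `L(Σ) ≤ (2 m̄)/3 + 1/3`, where `2 m̄` is the number of edges. -/
theorem two_thirds_rule (mb : ℕ) (hmb : 0 < mb) (m : ZMod (2 * mb))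
    (σ : Equiv.Perm (ZMod (2 * mb))) (hσ : IsSkeleton m σ) :
    (Set.ncard {s : Set (ZMod (2 * mb)) |
        ∃ i, ¬ (tauPerm σ).SameCycle 0 i ∧ s = {j | (tauPerm σ).SameCycle i j}} : ℝ)
      ≤ 2 * mb / 3 + 1 / 3 := by
  have : NeZero (2 * mb) := ⟨by omega⟩
  set τ : Equiv.Perm (ZMod (2 * mb)) := tauPerm σ
  rw [τ.ncard_orbits_eq_card_image]
  set F := ({i | ¬ τ.SameCycle 0 i} : Finset _).image τ.orbitFinset
  have hF : ∀ t ∈ F, ∃ i, ¬ τ.SameCycle i 0 ∧ t = τ.orbitFinset i := by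
    simp only [F, mem_image, mem_filter, mem_univ, true_and]
    rintro t ⟨i, hi, rfl⟩
    exact ⟨i, fun h => hi h.symm, rfl⟩
  have hcount := three_mul_card_le_of_pairwiseDisjoint (s := univ.erase 0) (F := F) m
    (τ.pairwiseDisjoint_range_orbitFinset.subset (by simp [F, Set.image_subset_iff]))
    (fun t ht x hx => by
      obtain ⟨i, hi, rfl⟩ := hF t ht
      exact mem_erase.2 ⟨by rintro rfl; exact hi (Equiv.Perm.mem_orbitFinset.1 hx), mem_univ x⟩)
    (fun t ht => by obtain ⟨i, -, rfl⟩ := hF t ht; exact Equiv.Perm.orbitFinset_nonempty i)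
    (fun t ht hm => by
      obtain ⟨i, hi, rfl⟩ := hF t ht
      exact hσ.three_le_card_orbitFinset hi (mt Equiv.Perm.mem_orbitFinset.2 hm))
  rw [card_erase_of_mem (mem_univ _), card_univ, ZMod.card] at hcount
  have hℝ : (3 * #F : ℝ) ≤ 2 * mb + 1 := by exact_mod_cast (by omega : 3 * #F ≤ 2 * mb + 1)
  linarith
end

section
/- Every orbit of the map τ (associated to a skeleton pairing Σ of the edges of the 2m̄-cycle with distinguished vertices 0 and m) that contains neither 0 nor m consists of at least 3 vertices. -/
/-- Every orbit of `τ` containing neither `0` nor `m` consists of at least 3 vertices. -/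
theorem orbit_card_ge_three {n : ℕ} (hn : n ≠ 0) (m : ZMod n)
    (σ : Equiv.Perm (ZMod n)) (hσ : IsSkeleton m σ) (i : ZMod n)
    (hi : ∀ j, (tauPerm σ).SameCycle i j → j ≠ 0 ∧ j ≠ m) :
    3 ≤ Set.ncard {j | (tauPerm σ).SameCycle i j} := by
  obtain ⟨h1, h2, h3, h4⟩ := hσ
  haveI : NeZero n := ⟨hn⟩
  set t := tauPerm σ with htdef
  have ht : ∀ j, t j = σ j + 1 := fun j => rfl
  have hc1 : t.SameCycle i (t i) := ⟨1, by simp⟩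
  have hc2 : t.SameCycle i (t (t i)) := ⟨2, by rw [zpow_two]; rfl⟩
  -- no fixed points on this orbit
  have hfix : ∀ j, t.SameCycle i j → t j ≠ j := by
    intro j hj hfj
    rw [ht] at hfj
    have hσj : σ j = j - 1 := by linear_combination hfj
    have : σ (j - 1) = (j - 1) + 1 := by
      have := h1 j
      rw [hσj] at this
      rw [this]; ring
    rcases h3 (j - 1) this with h | h
    · exact (hi j hj).1 (by linear_combination h)
    · exact (hi j hj).2 (by linear_combination h)
  have h01 : i ≠ t i := fun h => hfix i (Equiv.Perm.SameCycle.refl _ _) h.symm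
  have h12 : t i ≠ t (t i) := fun h => hfix (t i) hc1 h.symm
  -- i ≠ t (t i)
  have h02 : i ≠ t (t i) := by
    intro h
    have hkey : σ (σ i + 1) = σ (σ i) - 1 := by
      rw [h1]
      have : σ (σ i + 1) + 1 = i := by rw [ht, ht] at h; exact h.symm
      linear_combination this
    rcases h4 (σ i) hkey with hA | hA | hA | hA
    · exact (hi (t i) hc1).1 (by rw [ht]; exact hA)
    · exact (hi (t i) hc1).2 (by rw [ht]; exact hA)
    · rw [h1] at hA; exact (hi i (Equiv.Perm.SameCycle.refl _ _)).1 hA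
    · rw [h1] at hA; exact (hi i (Equiv.Perm.SameCycle.refl _ _)).2 hA
  -- conclude
  have hsub : ({i, t i, t (t i)} : Set (ZMod n)) ⊆ {j | t.SameCycle i j} := by
    intro x hx
    rcases hx with rfl | rfl | rfl
    · exact Equiv.Perm.SameCycle.refl _ _
    · exact hc1
    · exact hc2
  have h3card : ({i, t i, t (t i)} : Set (ZMod n)).ncard = 3 := by
    rw [Set.ncard_eq_three]
    exact ⟨i, t i, t (t i), h01, h02, h12, rfl⟩
  calc (3 : ℕ) = ({i, t i, t (t i)} : Set (ZMod n)).ncard := h3card.symm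
    _ ≤ _ := Set.ncard_le_ncard hsub (Set.toFinite _)
end

section
/- Chen's delocalization bound: Let H be a Hermitian matrix on ℓ²(Λ) for a finite set Λ, with orthonormal eigenbasis {ψ_α}_{α∈A}. For x ∈ Λ and ℓ > 0 let P_{x,ℓ} be multiplication by 1[|y − x| ≥ ℓ] (with respect to some metric on Λ), and define A_{ε,ℓ} := {α ∈ A : Σ_x |ψ_α(x)| · ‖P_{x,ℓ}ψ_α‖ < ε}. Then for any t ∈ ℝ and any ζ > 0, (1/|A|)Σ_x ‖P_{x,ℓ} e^{-itH} δ_x‖² ≤ (1 + 1/ζ)·ε + (1+ζ)·|A∖A_{ε,ℓ}|/|A|. -/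
/-!
Expand `e^{-itH} δ_x = ∑_α e^{-itλ_α} conj (ψ_α(x)) ψ_α` and split it as `u_x + w_x`, where `u_x`
collects the well-localized eigenvectors `α ∈ A_{ε,ℓ}`. With `P = P_{x,ℓ}`,
`‖P(u + w)‖² ≤ (1 + 1/ζ)‖Pu‖² + (1 + ζ)‖Pw‖²`. By Bessel's inequality `‖P u_x‖ ≤ ‖u_x‖ ≤ 1`, so
`‖P u_x‖² ≤ ‖P u_x‖ ≤ ∑_{α ∈ A_{ε,ℓ}} |ψ_α(x)| ‖P_{x,ℓ} ψ_α‖`, which sums over `x` to at most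
`ε |A_{ε,ℓ}|`; and by Parseval `‖P w_x‖² ≤ ∑_{α ∉ A_{ε,ℓ}} |ψ_α(x)|²`, which sums over `x` to
`|A ∖ A_{ε,ℓ}|` because every `ψ_α` is normalized.
-/

open Finset

lemma add_sq_le_weighted {a b ζ : ℝ} (hζ : 0 < ζ) :
    (a + b) ^ 2 ≤ (1 + 1 / ζ) * a ^ 2 + (1 + ζ) * b ^ 2 := by
  have hgap : ζ * ((1 + 1 / ζ) * a ^ 2 + (1 + ζ) * b ^ 2 - (a + b) ^ 2) = (a - ζ * b) ^ 2 := by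
    field_simp; ring
  nlinarith [sq_nonneg (a - ζ * b)]

lemma norm_add_sq_le_weighted {E : Type*} [SeminormedAddGroup E] (u w : E) {ζ : ℝ}
    (hζ : 0 < ζ) : ‖u + w‖ ^ 2 ≤ (1 + 1 / ζ) * ‖u‖ ^ 2 + (1 + ζ) * ‖w‖ ^ 2 :=
  (pow_le_pow_left₀ (norm_nonneg _) (norm_add_le u w) 2).trans (add_sq_le_weighted hζ)

section Orthonormal

variable {𝕜 E ι : Type*} [RCLike 𝕜] [NormedAddCommGroup E] [InnerProductSpace 𝕜 E]
  {v : ι → E}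

theorem Orthonormal.norm_sum_smul_sq (hv : Orthonormal 𝕜 v) (l : ι → 𝕜) (s : Finset ι) :
    ‖∑ i ∈ s, l i • v i‖ ^ 2 = ∑ i ∈ s, ‖l i‖ ^ 2 := by
  rw [@norm_sq_eq_re_inner 𝕜, hv.inner_sum, map_sum]
  simp [RCLike.conj_mul]

variable {F : Type*} [SeminormedAddCommGroup F] [NormedSpace 𝕜 F] [Fintype ι] [DecidableEq ι]

theorem Orthonormal.norm_map_sum_smul_sq_le (hv : Orthonormal 𝕜 v) (P : E →ₗ[𝕜] F)
    (hP : ∀ f, ‖P f‖ ≤ ‖f‖) (l : ι → 𝕜) (hl : ∑ i, ‖l i‖ ^ 2 ≤ 1) (G : Finset ι) {ζ : ℝ}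
    (hζ : 0 < ζ) :
    ‖P (∑ i, l i • v i)‖ ^ 2 ≤
      (1 + 1 / ζ) * ∑ i ∈ G, ‖l i‖ * ‖P (v i)‖ + (1 + ζ) * ∑ i ∈ Gᶜ, ‖l i‖ ^ 2 := by
  set u := ∑ i ∈ G, l i • v i
  set w := ∑ i ∈ Gᶜ, l i • v i
  have hu_le_one : ‖P u‖ ≤ 1 := by
    refine (hP u).trans ((pow_le_one_iff_of_nonneg (norm_nonneg u) two_ne_zero).mp ?_)
    rw [hv.norm_sum_smul_sq]
    exact (sum_le_univ_sum_of_nonneg fun i => by positivity).trans hl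
  have hu : ‖P u‖ ^ 2 ≤ ∑ i ∈ G, ‖l i‖ * ‖P (v i)‖ := calc
    ‖P u‖ ^ 2 ≤ ‖P u‖ := pow_le_of_le_one (norm_nonneg _) hu_le_one two_ne_zero
    _ ≤ ∑ i ∈ G, ‖P (l i • v i)‖ := by rw [map_sum]; exact norm_sum_le _ _
    _ = ∑ i ∈ G, ‖l i‖ * ‖P (v i)‖ := by simp only [map_smul, norm_smul]
  have hw : ‖P w‖ ^ 2 ≤ ∑ i ∈ Gᶜ, ‖l i‖ ^ 2 :=
    hv.norm_sum_smul_sq l Gᶜ ▸ pow_le_pow_left₀ (norm_nonneg _) (hP w) 2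
  calc ‖P (∑ i, l i • v i)‖ ^ 2 = ‖P u + P w‖ ^ 2 := by rw [← map_add, sum_add_sum_compl]
    _ ≤ (1 + 1 / ζ) * ‖P u‖ ^ 2 + (1 + ζ) * ‖P w‖ ^ 2 := norm_add_sq_le_weighted _ _ hζ
    _ ≤ _ := by gcongr

end Orthonormal

theorem Orthonormal.sum_norm_map_sum_smul_sq_le {𝕜 F Λ ι : Type*} [RCLike 𝕜]
    [SeminormedAddCommGroup F] [NormedSpace 𝕜 F] [Fintype Λ] [Fintype ι]
    {v : ι → EuclideanSpace 𝕜 Λ} (hv : Orthonormal 𝕜 v) (P : Λ → EuclideanSpace 𝕜 Λ →ₗ[𝕜] F)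
    (hP : ∀ x f, ‖P x f‖ ≤ ‖f‖) (c : Λ → ι → 𝕜) (hc : ∀ x i, ‖c x i‖ = ‖v i x‖) {ζ : ℝ}
    (hζ : 0 < ζ) (ε : ℝ) :
    ∑ x, ‖P x (∑ i, c x i • v i)‖ ^ 2 ≤
      (1 + 1 / ζ) * (#{i | ∑ x, ‖v i x‖ * ‖P x (v i)‖ < ε} • ε) +
        (1 + ζ) * (Fintype.card ι - #{i | ∑ x, ‖v i x‖ * ‖P x (v i)‖ < ε}) := by
  classical
  set G : Finset ι := {i | ∑ x, ‖v i x‖ * ‖P x (v i)‖ < ε}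
  have hbessel (x : Λ) : ∑ i, ‖v i x‖ ^ 2 ≤ 1 := by
    simpa [EuclideanSpace.inner_single_right] using
      hv.sum_inner_products_le (EuclideanSpace.single x (1 : 𝕜)) (s := univ)
  calc ∑ x, ‖P x (∑ i, c x i • v i)‖ ^ 2
      ≤ ∑ x, ((1 + 1 / ζ) * ∑ i ∈ G, ‖v i x‖ * ‖P x (v i)‖ +
          (1 + ζ) * ∑ i ∈ Gᶜ, ‖v i x‖ ^ 2) := sum_le_sum fun x _ => by
        simpa only [hc] using
          hv.norm_map_sum_smul_sq_le (P x) (hP x) (c x) (by simpa only [hc] using hbessel x) G hζ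
    _ = (1 + 1 / ζ) * ∑ i ∈ G, ∑ x, ‖v i x‖ * ‖P x (v i)‖ +
          (1 + ζ) * ∑ i ∈ Gᶜ, ‖v i‖ ^ 2 := by
        simp only [sum_add_distrib, ← mul_sum, EuclideanSpace.norm_sq_eq]
        rw [sum_comm, sum_comm (s := Gᶜ)]
    _ ≤ _ := by
        have hG : ∑ i ∈ G, ∑ x, ‖v i x‖ * ‖P x (v i)‖ ≤ #G • ε :=
          sum_le_card_nsmul _ _ _ fun i hi => (mem_filter.mp hi).2.le
        have hGc : ∑ i ∈ Gᶜ, ‖v i‖ ^ 2 = Fintype.card ι - #G := by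
          simp [hv.1, card_compl, Nat.cast_sub (card_le_univ G)]
        grw [hG, hGc]

section IndicatorMul

variable {𝕜 Λ : Type*} [RCLike 𝕜] [Fintype Λ] (p : Λ → Prop) [DecidablePred p]

/-- The paper's `P_{x,ℓ}` is `indicatorMul fun y => ℓ ≤ dist y x`. -/
def indicatorMul : EuclideanSpace 𝕜 Λ →ₗ[𝕜] EuclideanSpace 𝕜 Λ where
  toFun f := WithLp.toLp 2 fun y => if p y then f y else 0
  map_add' f g := by ext y; by_cases h : p y <;> simp [h]
  map_smul' c f := by ext y; by_cases h : p y <;> simp [h]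

theorem norm_indicatorMul_sq (f : EuclideanSpace 𝕜 Λ) :
    ‖indicatorMul p f‖ ^ 2 = ∑ y, if p y then ‖f y‖ ^ 2 else 0 := by
  rw [EuclideanSpace.norm_sq_eq]
  refine sum_congr rfl fun y _ => ?_
  by_cases h : p y <;> simp [indicatorMul, h]

theorem norm_indicatorMul_toLp (f : Λ → 𝕜) :
    ‖indicatorMul p (WithLp.toLp 2 f)‖ = √(∑ y, if p y then ‖f y‖ ^ 2 else 0) := by
  rw [← norm_indicatorMul_sq, Real.sqrt_sq (norm_nonneg _)]

theorem norm_indicatorMul_le (f : EuclideanSpace 𝕜 Λ) : ‖indicatorMul p f‖ ≤ ‖f‖ := by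
  rw [← pow_le_pow_iff_left₀ (norm_nonneg _) (norm_nonneg _) two_ne_zero,
    norm_indicatorMul_sq, EuclideanSpace.norm_sq_eq]
  exact sum_le_sum fun y _ => by split_ifs <;> simp

end IndicatorMul

section Spectral

variable {Λ : Type*} [Fintype Λ] [DecidableEq Λ] {ψ : Λ → Λ → ℂ}

open Matrix

theorem orthonormal_toLp_iff :
    Orthonormal ℂ (fun α => (WithLp.toLp 2 (ψ α) : EuclideanSpace ℂ Λ)) ↔
      ∀ α β, (∑ x, starRingEnd ℂ (ψ α x) * ψ β x) = if α = β then 1 else 0 := by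
  rw [orthonormal_iff_ite]
  simp [PiLp.inner_apply, mul_comm]

theorem Matrix.transpose_of_mem_unitaryGroup
    (horth : ∀ α β, (∑ x, starRingEnd ℂ (ψ α x) * ψ β x) = if α = β then 1 else 0) :
    (of ψ)ᵀ ∈ unitaryGroup Λ ℂ := by
  rw [mem_unitaryGroup_iff']
  ext α β
  simpa [mul_apply, one_apply] using horth α β

theorem Matrix.exp_smul_eq_mul_diagonal_mul_star {H : Matrix Λ Λ ℂ} {μ : Λ → ℂ}
    (horth : ∀ α β, (∑ x, starRingEnd ℂ (ψ α x) * ψ β x) = if α = β then 1 else 0)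
    (heig : ∀ α, H *ᵥ ψ α = μ α • ψ α) (s : ℂ) :
    NormedSpace.exp (s • H) =
      (of ψ)ᵀ * diagonal (fun α => Complex.exp (s * μ α)) * star (of ψ)ᵀ := by
  set U : unitaryGroup Λ ℂ := ⟨_, transpose_of_mem_unitaryGroup horth⟩
  have hHU : H * U = U * diagonal μ := by
    ext y α
    rw [mul_diagonal]
    simpa [mul_apply, mulVec, dotProduct, mul_comm, U] using congrFun (heig α) y
  set u := Unitary.toUnits U
  have hH : s • H =
      (u : Matrix Λ Λ ℂ) * diagonal (s • μ) * ((u⁻¹ : (Matrix Λ Λ ℂ)ˣ) : Matrix Λ Λ ℂ) := by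
    rw [diagonal_smul, Matrix.mul_smul, Matrix.smul_mul, Unitary.val_toUnits_apply, ← hHU,
      mul_assoc]
    simp [u]
  rw [hH, exp_units_conj, exp_diagonal]
  congr
  ext α
  simp [Complex.exp_eq_exp_ℂ]

theorem Matrix.exp_smul_mulVec_single_eq_sum {H : Matrix Λ Λ ℂ} {μ : Λ → ℂ}
    (horth : ∀ α β, (∑ x, starRingEnd ℂ (ψ α x) * ψ β x) = if α = β then 1 else 0)
    (heig : ∀ α, H *ᵥ ψ α = μ α • ψ α) (s : ℂ) (x : Λ) :
    NormedSpace.exp (s • H) *ᵥ Pi.single x 1 =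
      ∑ α, (Complex.exp (s * μ α) * starRingEnd ℂ (ψ α x)) • ψ α := by
  rw [exp_smul_eq_mul_diagonal_mul_star horth heig]
  ext y
  simp only [mulVec_single, Pi.smul_apply, col_apply, op_smul_eq_mul, mul_one]
  rw [mul_apply]
  simp only [mul_diagonal, transpose_apply, of_apply, star_apply, RCLike.star_def,
    Finset.sum_apply, Pi.smul_apply, smul_eq_mul]
  exact sum_congr rfl fun α _ => by ring

end Spectral

open Classical in
theorem chen_delocalization_bound_general {Λ : Type*} [Fintype Λ] [DecidableEq Λ]
    (dist : Λ → Λ → ℝ) (H : Matrix Λ Λ ℂ)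
    (ψ : Λ → Λ → ℂ) (μ : Λ → ℝ)
    (horth : ∀ α β, (∑ x, starRingEnd ℂ (ψ α x) * ψ β x) = if α = β then 1 else 0)
    (heig : ∀ α, H.mulVec (ψ α) = (μ α : ℂ) • ψ α)
    (ℓ ε ζ : ℝ) (hε : 0 < ε) (hζ : 0 < ζ) (t : ℝ) :
    (1 / (Fintype.card Λ : ℝ)) * ∑ x,
        (∑ y, if ℓ ≤ dist y x then
          ‖(NormedSpace.exp ((-Complex.I * (t : ℂ)) • H)).mulVec (Pi.single x 1) y‖ ^ 2
        else 0)
      ≤ (1 + 1 / ζ) * ε + (1 + ζ) *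
        (((Fintype.card Λ : ℝ) -
          ((Finset.univ.filter (fun α : Λ =>
            (∑ x, ‖ψ α x‖ *
              Real.sqrt (∑ y, if ℓ ≤ dist y x then ‖ψ α y‖ ^ 2 else 0)) < ε)).card : ℝ))
          / (Fintype.card Λ : ℝ)) := by
  set n : ℝ := (Fintype.card Λ : ℝ)
  set v : Λ → EuclideanSpace ℂ Λ := fun α => WithLp.toLp 2 (ψ α)
  set P : Λ → EuclideanSpace ℂ Λ →ₗ[ℂ] EuclideanSpace ℂ Λ := fun x =>
    indicatorMul fun y => ℓ ≤ dist y x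
  set c : Λ → Λ → ℂ := fun x α => Complex.exp (-Complex.I * t * μ α) * starRingEnd ℂ (ψ α x)
  have hc (x α : Λ) : ‖c x α‖ = ‖v α x‖ := by simp [c, v, Complex.norm_exp]
  have hevol (x : Λ) : (∑ y, if ℓ ≤ dist y x then
      ‖(NormedSpace.exp ((-Complex.I * (t : ℂ)) • H)).mulVec (Pi.single x 1) y‖ ^ 2 else 0) =
      ‖P x (∑ α, c x α • v α)‖ ^ 2 := by
    rw [norm_indicatorMul_sq, Matrix.exp_smul_mulVec_single_eq_sum horth heig]
    simp [v, c]
  have hsum := (orthonormal_toLp_iff.mpr horth).sum_norm_map_sum_smul_sq_le P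
    (fun x => norm_indicatorMul_le _) c hc hζ ε
  simp only [P, norm_indicatorMul_toLp, nsmul_eq_mul] at hsum
  set g : ℕ := #{α | ∑ x, ‖ψ α x‖ * √(∑ y, if ℓ ≤ dist y x then ‖ψ α y‖ ^ 2 else 0) < ε}
  have hg : (g : ℝ) / n ≤ 1 :=
    div_le_one_of_le₀ (Nat.cast_le.mpr (card_le_univ _)) (Nat.cast_nonneg _)
  simp only [hevol]
  calc 1 / n * ∑ x, ‖P x (∑ α, c x α • v α)‖ ^ 2
      ≤ 1 / n * ((1 + 1 / ζ) * (g * ε) + (1 + ζ) * (n - g)) := by gcongr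
    _ = (1 + 1 / ζ) * ε * (g / n) + (1 + ζ) * ((n - g) / n) := by ring
    _ ≤ _ := by grw [hg, mul_one]

open Classical in
/-- Chen's delocalization bound: for a Hermitian matrix `H` on `ℓ²(Λ)` with orthonormal
eigenbasis `{ψ_α}` (eigenvalues `μ_α`), `P_{x,ℓ}` the multiplication by `1[dist(y,x) ≥ ℓ]`,
and `A_{ε,ℓ} = {α : Σ_x |ψ_α(x)| ‖P_{x,ℓ} ψ_α‖ < ε}`, one has, for every `t` and `ζ > 0`,
`(1/|A|) Σ_x ‖P_{x,ℓ} e^{-itH} δ_x‖² ≤ (1 + 1/ζ) ε + (1+ζ) |A ∖ A_{ε,ℓ}| / |A|`. -/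
theorem chen_delocalization_bound {Λ : Type*} [Fintype Λ] [DecidableEq Λ] [Nonempty Λ]
    (dist : Λ → Λ → ℝ) (H : Matrix Λ Λ ℂ) (hHerm : H.IsHermitian)
    (ψ : Λ → Λ → ℂ) (μ : Λ → ℝ)
    (horth : ∀ α β, (∑ x, starRingEnd ℂ (ψ α x) * ψ β x) = if α = β then 1 else 0)
    (heig : ∀ α, H.mulVec (ψ α) = (μ α : ℂ) • ψ α)
    (ℓ ε ζ : ℝ) (hε : 0 < ε) (hζ : 0 < ζ) (t : ℝ) :
    (1 / (Fintype.card Λ : ℝ)) * ∑ x,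
        (∑ y, if ℓ ≤ dist y x then
          ‖(NormedSpace.exp ((-Complex.I * (t : ℂ)) • H)).mulVec (Pi.single x 1) y‖ ^ 2
        else 0)
      ≤ (1 + 1 / ζ) * ε + (1 + ζ) *
        (((Fintype.card Λ : ℝ) -
          ((Finset.univ.filter (fun α : Λ =>
            (∑ x, ‖ψ α x‖ *
              Real.sqrt (∑ y, if ℓ ≤ dist y x then ‖ψ α y‖ ^ 2 else 0)) < ε)).card : ℝ))
          / (Fintype.card Λ : ℝ)) :=
  chen_delocalization_bound_general dist H ψ μ horth heig ℓ ε ζ hε hζ t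
end
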